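/- Let t' = ({y_j}_{j∈I'}, I'_uf, B') be a seed and H ⊆ I' a subset such that b'_{jk} = 0 whenever exactly one of j ∈ I', k ∈ I'_uf lies in H. Set J = I'∖H and t'_J = ({y_j}_{j∈J}, I'_uf∖H, B' restricted to J × (I'_uf∖H)). Then the ring homomorphism 𝔈_H : L(t'_J) → L(t') determined by y_j ↦ y_j for j ∈ J is an injective cluster morphism from t'_J to t'. -/

import Mathlib

open scoped BigOperators

noncomputable section

/-- The Laurent polynomial ring `ℚ[x_i^{±1} : i ∈ I]`, realized as the group algebra
over `ℚ` of the free abelian group `I →₀ ℤ`. -/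
abbrev LaurentRing (I : Type*) : Type _ := AddMonoidAlgebra ℚ (I →₀ ℤ)

instance (I : Type*) : IsDomain (LaurentRing I) := NoZeroDivisors.to_isDomain _

/-- The Laurent variable `x_i`. -/
def Xv {I : Type*} (i : I) : LaurentRing I :=
  AddMonoidAlgebra.single (Finsupp.single i 1) 1

/-- The inverse Laurent variable `x_i⁻¹`. -/
def Xinv {I : Type*} (i : I) : LaurentRing I :=
  AddMonoidAlgebra.single (Finsupp.single i (-1)) 1

/-- A seed on the vertex set `I`: a set `uf` of unfrozen vertices together with an integer
exchange matrix `B` (rows indexed by `I`, columns meaningful only for `j ∈ uf`) whose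
principal part is skew-symmetric.  The cluster variables of the seed are the standard
generators `Xv i` of the Laurent polynomial ring `LaurentRing I`. -/
structure Seed (I : Type*) where
  uf : Set I
  B : I → I → ℤ
  skew : ∀ i ∈ uf, ∀ j ∈ uf, B i j = - B j i

open Classical in
/-- Mutation of the exchange matrix at the vertex `k`:
`(μ_k B)_{ij} = -b_{ij}` if `i = k` or `j = k`, and
`(μ_k B)_{ij} = b_{ij} + sgn(b_{ik}) * max (b_{ik} b_{kj}) 0` otherwise. -/
def mutB {I : Type*} (B : I → I → ℤ) (k : I) : I → I → ℤ := fun i j =>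
  if i = k ∨ j = k then - B i j
  else B i j + (B i k).sign * max (B i k * B k j) 0

/-- The one-step mutated cluster variable `μ_k(x)_k`, as an element of the Laurent ring:
`(∏_{j : b_{jk} > 0} x_j^{b_{jk}} + ∏_{j : b_{jk} < 0} x_j^{-b_{jk}}) / x_k`. -/
def exchVar {I : Type*} (B : I → I → ℤ) (k : I) : LaurentRing I :=
  ((∏ᶠ j : I, Xv j ^ (max (B j k) 0).toNat) +
    (∏ᶠ j : I, Xv j ^ (max (-(B j k)) 0).toNat)) * Xinv k

/-- A cluster morphism from the seed `t` to the seed `t'`: a ring homomorphism `hom`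
between the Laurent polynomial rings sending each cluster variable `x_i` either to `1`
(the set of such `i` being `F`) or to a cluster variable `y_{vmap i}`, such that the induced
vertex map is injective on `I ∖ F`, maps unfrozen vertices off `F` to unfrozen vertices,
intertwines the one-step mutated variables there, and satisfies the sign condition
`b_{ij} * b'_{vmap i, vmap j} ≥ 0` on unfrozen vertices off `F`. -/
structure ClusterMorphism {I I' : Type*} (t : Seed I) (t' : Seed I') where
  hom : LaurentRing I →+* LaurentRing I'
  vmap : I → I'
  hx : ∀ i : I, hom (Xv i) = 1 ∨ hom (Xv i) = Xv (vmap i)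
  vinj : ∀ i i' : I, hom (Xv i) ≠ 1 → hom (Xv i') ≠ 1 → vmap i = vmap i' → i = i'
  huf : ∀ i ∈ t.uf, hom (Xv i) ≠ 1 → vmap i ∈ t'.uf
  hmut : ∀ i ∈ t.uf, hom (Xv i) ≠ 1 → hom (exchVar t.B i) = exchVar t'.B (vmap i)
  hsign : ∀ i ∈ t.uf, ∀ j ∈ t.uf, hom (Xv i) ≠ 1 → hom (Xv j) ≠ 1 →
    0 ≤ t.B i j * t'.B (vmap i) (vmap j)

/-- The ring homomorphism between Laurent rings induced by a map of the variable
index sets, `x_i ↦ x_{f i}`. -/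
def reindexHom {I I' : Type*} (f : I → I') : LaurentRing I →+* LaurentRing I' :=
  AddMonoidAlgebra.mapDomainRingHom ℚ (Finsupp.mapDomain.addMonoidHom f)

/-- The deleting morphism `Del_F`: the ring homomorphism with `x_i ↦ 1` for `i ∈ F` and
`x_j ↦ x_j` for `j ∉ F`. -/
def DelHom {I : Type*} (F : Set I) : LaurentRing I →+* LaurentRing {i : I // i ∉ F} :=
  AddMonoidAlgebra.mapDomainRingHom ℚ
    (AddMonoidHom.mk' (Finsupp.subtypeDomain (fun i => i ∉ F))
      (fun _ _ => Finsupp.subtypeDomain_add))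

/-- The similarity morphism `𝔖_σ`: the ring homomorphism with `x_i ↦ y_{σ i}`. -/
def SimHom {I I' : Type*} (σ : I → I') : LaurentRing I →+* LaurentRing I' :=
  reindexHom σ

/-- The freezing morphism `𝔉_E` attached to a set `E` of unfrozen vertices: on the level
of the Laurent polynomial rings it is the identity ring map (only the seed data changes). -/
def FreezeHom {I : Type*} {γ : Type*} (_E : Set γ) : LaurentRing I →+* LaurentRing I :=
  RingHom.id _

/-- The adding-vertices morphism `𝔈_H`, attached to the complement `s = I' ∖ H` of the
added vertex set: the inclusion `y_j ↦ y_j` of the Laurent polynomial ring on the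
variables indexed by `s`. -/
def IncHom {I' : Type*} (s : Set I') : LaurentRing ↥s →+* LaurentRing I' :=
  reindexHom (Subtype.val : ↥s → I')

/-!
`𝔈_H` is the reindexing of Laurent rings along the injection `J ↪ I'`. It carries the exchange
binomial of `k ∈ I'_uf ∖ H` in `t'_J` to that in `t'`, because the hypothesis on `H` makes
`b'_{hk} = 0` for `h ∈ H`, so the extra factors `y_h ^ 0` are trivial; the sign condition
holds since `b'_{ij} · b'_{ij} ≥ 0`.
-/

theorem finprod_comp_of_mulSupport_subset_range {α β M : Type*} [CommMonoid M] {f : α → β}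
    (hf : Function.Injective f) {g : β → M} (hg : Function.mulSupport g ⊆ Set.range f) :
    ∏ᶠ a, g (f a) = ∏ᶠ b, g b := by
  rw [← finprod_mem_range hf, ← finprod_mem_univ g]
  exact finprod_mem_inter_mulSupport_eq' _ _ _ fun _ hb => iff_of_true (hg hb) trivial

section Reindex

variable {I I' : Type*} {f : I → I'}

lemma reindexHom_single (f : I → I') (a : I →₀ ℤ) (r : ℚ) :
    reindexHom f (AddMonoidAlgebra.single a r) =
      AddMonoidAlgebra.single (Finsupp.mapDomain f a) r := by
  simp [reindexHom, AddMonoidAlgebra.mapDomainRingHom, Finsupp.mapDomain.addMonoidHom,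
    AddMonoidAlgebra.mapDomain_single]

lemma reindexHom_Xv (f : I → I') (i : I) : reindexHom f (Xv i) = Xv (f i) := by
  rw [Xv, reindexHom_single, Finsupp.mapDomain_single]; rfl

lemma reindexHom_Xinv (f : I → I') (i : I) : reindexHom f (Xinv i) = Xinv (f i) := by
  rw [Xinv, reindexHom_single, Finsupp.mapDomain_single]; rfl

lemma reindexHom_injective (hf : Function.Injective f) : Function.Injective (reindexHom f) :=
  AddMonoidAlgebra.mapDomain_injective (Finsupp.mapDomain_injective hf)

lemma reindexHom_finprod_Xv_pow (hf : Function.Injective f) (e : I' → ℕ)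
    (he : ∀ j ∉ Set.range f, e j = 0) :
    reindexHom f (∏ᶠ i, Xv i ^ e (f i)) = ∏ᶠ j, Xv j ^ e j := by
  refine ((reindexHom f).toMonoidHom.map_finprod_of_injective (reindexHom_injective hf) _).trans ?_
  simp only [RingHom.toMonoidHom_eq_coe, MonoidHom.coe_coe, map_pow, reindexHom_Xv]
  refine finprod_comp_of_mulSupport_subset_range (g := fun j => Xv j ^ e j) hf fun j hj => ?_
  by_contra hjf
  exact hj (by simp only [he j hjf, pow_zero])

theorem reindexHom_exchVar (hf : Function.Injective f) {B : I → I → ℤ} {B' : I' → I' → ℤ}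
    (k : I) (hB : ∀ i, B i k = B' (f i) (f k)) (hB' : ∀ j ∉ Set.range f, B' j (f k) = 0) :
    reindexHom f (exchVar B k) = exchVar B' (f k) := by
  simp only [exchVar, map_mul, map_add, reindexHom_Xinv, hB]
  rw [reindexHom_finprod_Xv_pow hf (fun j => (max (B' j (f k)) 0).toNat)
      fun j hj => by simp [hB' j hj],
    reindexHom_finprod_Xv_pow hf (fun j => (max (-B' j (f k)) 0).toNat)
      fun j hj => by simp [hB' j hj]]

end Reindex

theorem statement16_general {I' : Type*} (t' : Seed I') (H : Set I')
    (hH : ∀ j : I', ∀ k ∈ t'.uf, Xor' (j ∈ H) (k ∈ H) → t'.B j k = 0) :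
    ∃ c : ClusterMorphism
        (Seed.mk {j : ↥{j : I' | j ∉ H} | (j : I') ∈ t'.uf} (fun a b => t'.B a b)
          (fun i hi j hj => t'.skew i hi j hj))
        t',
      c.hom = IncHom {j : I' | j ∉ H} ∧ Function.Injective c.hom := by
  refine ⟨{ hom := IncHom {j | j ∉ H}
            vmap := Subtype.val
            hx := fun i => Or.inr (reindexHom_Xv _ i)
            vinj := fun _ _ _ _ => Subtype.ext
            huf := fun _ hi _ => hi
            hmut := fun i hi _ => reindexHom_exchVar Subtype.val_injective i (fun _ => rfl)
              fun j hj => hH j i hi (Or.inl ⟨by simpa using hj, i.2⟩)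
            hsign := fun _ _ _ _ _ _ => mul_self_nonneg _ },
    rfl, reindexHom_injective Subtype.val_injective⟩

/-- Let `t'` be a seed on `I'` and `H ⊆ I'` with `b'_{jk} = 0` whenever
exactly one of `j ∈ I'`, `k ∈ I'_uf` lies in `H`.  With `J = I' ∖ H`, the ring
homomorphism `𝔈_H : L(t'_J) → L(t')`, `y_j ↦ y_j`, is an injective cluster morphism from
the seed `t'_J = ({y_j}_{j∈J}, I'_uf ∖ H, B' restricted to J × (I'_uf ∖ H))` to `t'`. -/
theorem statement16 {I' : Type*} [Finite I'] (t' : Seed I') (H : Set I')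
    (hH : ∀ j : I', ∀ k ∈ t'.uf, Xor' (j ∈ H) (k ∈ H) → t'.B j k = 0) :
    ∃ c : ClusterMorphism
        (Seed.mk {j : ↥{j : I' | j ∉ H} | (j : I') ∈ t'.uf} (fun a b => t'.B a b)
          (fun i hi j hj => t'.skew i hi j hj))
        t',
      c.hom = IncHom {j : I' | j ∉ H} ∧ Function.Injective c.hom :=
  statement16_general t' H hH

end
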